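/- arXiv:1211.6189 — 3 statements merged into one kernel-verified Lean document; each statement's English description precedes it below -/
import Mathlib

section
/- If ≺₁ and ≺₂ are both irreflexive transitive relations on Σ and ≺₁ ⊆ ≺₂, then for every configuration, the set of globally enabled interactions under ≺₂ is contained in the set of interactions satisfying joint participation; moreover, if some interaction satisfies joint participation at a configuration, then some interaction is globally enabled under ≺₂. Hence the set of deadlocked configurations is the same under ≺₁ and ≺₂. -/
/-! On a finite type every strict order has a maximal element in each nonempty subset, so under
any strict priority a configuration is deadlocked exactly when no interaction satisfies joint
participation; this condition does not mention the priority. -/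

theorem Finite.exists_maximal_of_irreflexive_of_transitive {α : Type*} [Finite α]
    {r : α → α → Prop} (hirr : Irreflexive r) (htrans : Transitive r) {p : α → Prop}
    (h : ∃ a, p a) : ∃ a, p a ∧ ¬ ∃ b, p b ∧ r a b := by
  have : IsStrictOrder α (flip r) :=
    { irrefl := hirr, trans := fun _ _ _ hab hbc => htrans hbc hab }
  obtain ⟨m, hm, hmin⟩ := (Finite.wellFounded_of_trans_of_irrefl (flip r)).has_min {a | p a} h
  exact ⟨m, hm, fun ⟨b, hb, hmb⟩ => hmin b hb hmb⟩

theorem Finite.not_exists_maximal_iff {α : Type*} [Finite α]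
    {r : α → α → Prop} (hirr : Irreflexive r) (htrans : Transitive r) (p : α → Prop) :
    (¬ ∃ a, p a ∧ ¬ ∃ b, p b ∧ r a b) ↔ ¬ ∃ a, p a :=
  not_congr ⟨fun ⟨a, ha, _⟩ => ⟨a, ha⟩, exists_maximal_of_irreflexive_of_transitive hirr htrans⟩

theorem stmt_2_general {Alph : Type*} [Fintype Alph]
    (r₁ r₂ : Alph → Alph → Prop)
    (h₁irr : Irreflexive r₁) (h₁trans : Transitive r₁)
    (h₂irr : Irreflexive r₂) (h₂trans : Transitive r₂)
    (JP : Alph → Prop) :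
    ({σ | JP σ ∧ ¬ ∃ τ, JP τ ∧ r₂ σ τ} ⊆ {σ | JP σ}) ∧
    ((∃ σ, JP σ) → ∃ σ, JP σ ∧ ¬ ∃ τ, JP τ ∧ r₂ σ τ) ∧
    ((¬ ∃ σ, JP σ ∧ ¬ ∃ τ, JP τ ∧ r₁ σ τ) ↔
      (¬ ∃ σ, JP σ ∧ ¬ ∃ τ, JP τ ∧ r₂ σ τ)) := by
  refine ⟨fun _ hσ => hσ.1, Finite.exists_maximal_of_irreflexive_of_transitive h₂irr h₂trans, ?_⟩
  rw [Finite.not_exists_maximal_iff h₁irr h₁trans, Finite.not_exists_maximal_iff h₂irr h₂trans]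

/-- For `r₁ ⊆ r₂` both irreflexive and transitive, and `JP` the
joint-participation predicate at a configuration, the globally enabled
interactions under `r₂` are contained in `JP`; if some interaction satisfies
joint participation then some interaction is enabled under `r₂`; hence the
deadlock status (no enabled interaction) is the same under `r₁` and `r₂`. -/
theorem stmt_2 {Alph : Type*} [Fintype Alph]
    (r₁ r₂ : Alph → Alph → Prop)
    (h₁irr : Irreflexive r₁) (h₁trans : Transitive r₁)
    (h₂irr : Irreflexive r₂) (h₂trans : Transitive r₂)
    (hsub : ∀ σ τ, r₁ σ τ → r₂ σ τ)
    (JP : Alph → Prop) :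
    ({σ | JP σ ∧ ¬ ∃ τ, JP τ ∧ r₂ σ τ} ⊆ {σ | JP σ}) ∧
    ((∃ σ, JP σ) → ∃ σ, JP σ ∧ ¬ ∃ τ, JP τ ∧ r₂ σ τ) ∧
    ((¬ ∃ σ, JP σ ∧ ¬ ∃ τ, JP τ ∧ r₁ σ τ) ↔
      (¬ ∃ σ, JP σ ∧ ¬ ∃ τ, JP τ ∧ r₂ σ τ)) :=
  stmt_2_general r₁ r₂ h₁irr h₁trans h₂irr h₂trans JP
end

section
/- In a system S under a deployable communication architecture Com, every globally enabled interaction at a configuration c is also distributively-enabled at c. -/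
/-- `Visible uses Com σ j`: interaction `σ` is visible by component `j`. -/
def Visible {ι Alph : Type*} (uses : ι → Alph → Prop) (Com : ι → ι → Prop)
    (σ : Alph) (j : ι) : Prop :=
  ∀ i, uses i σ → Com i j

/-- Deployability of a communication architecture `Com`: self-transmission,
group transmission, and existing-priority transmission. -/
def Deployable {ι Alph : Type*} (uses : ι → Alph → Prop)
    (prec : Alph → Alph → Prop) (Com : ι → ι → Prop) : Prop :=
  (∀ i, Com i i) ∧
  (∀ σ i j, uses i σ → uses j σ → Com i j ∧ Com j i) ∧
  (∀ σ τ i j, prec σ τ → uses j σ → uses i τ → Com i j)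

/-- Joint participation of `σ` at configuration `c`: every participating
component has a `σ`-labeled transition with a true guard. -/
def JointPart {ι Alph Config : Type*} (uses : ι → Alph → Prop)
    (hasTrans : Config → ι → Alph → Prop) (c : Config) (σ : Alph) : Prop :=
  ∀ i, uses i σ → hasTrans c i σ

/-- `σ` is globally enabled at `c`. -/
def GloballyEnabled {ι Alph Config : Type*} (uses : ι → Alph → Prop)
    (prec : Alph → Alph → Prop) (hasTrans : Config → ι → Alph → Prop)
    (c : Config) (σ : Alph) : Prop :=
  JointPart uses hasTrans c σ ∧ ¬ ∃ τ, prec σ τ ∧ JointPart uses hasTrans c τ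

/-- `σ` is distributively-enabled at `c` under architecture `Com`. -/
def DistEnabled {ι Alph Config : Type*} (uses : ι → Alph → Prop)
    (prec : Alph → Alph → Prop) (Com : ι → ι → Prop)
    (hasTrans : Config → ι → Alph → Prop) (c : Config) (σ : Alph) : Prop :=
  (∀ i, uses i σ → Visible uses Com σ i ∧ hasTrans c i σ) ∧
  (∀ τ, prec σ τ → (∀ i, uses i σ → Visible uses Com τ i) →
    ∃ j, uses j τ ∧ ¬ hasTrans c j τ)

section Interactions

variable {ι Alph Config : Type*} {uses : ι → Alph → Prop} {prec : Alph → Alph → Prop}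
  {Com : ι → ι → Prop} {hasTrans : Config → ι → Alph → Prop}

theorem Deployable.visible_of_uses (hdep : Deployable uses prec Com) {σ : Alph} {j : ι}
    (hj : uses j σ) : Visible uses Com σ j :=
  fun i hi => (hdep.2.1 σ i j hi hj).1

theorem exists_not_hasTrans_of_not_jointPart {c : Config} {τ : Alph}
    (h : ¬ JointPart uses hasTrans c τ) : ∃ j, uses j τ ∧ ¬ hasTrans c j τ := by
  simpa [JointPart] using h

theorem GloballyEnabled.exists_blocked {c : Config} {σ τ : Alph}
    (h : GloballyEnabled uses prec hasTrans c σ) (hστ : prec σ τ) :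
    ∃ j, uses j τ ∧ ¬ hasTrans c j τ :=
  exists_not_hasTrans_of_not_jointPart fun hτ => h.2 ⟨τ, hστ, hτ⟩

end Interactions

/-- Under a deployable communication architecture, every globally
enabled interaction is also distributively-enabled. -/
theorem stmt_3 {ι Alph Config : Type*}
    (uses : ι → Alph → Prop) (prec : Alph → Alph → Prop)
    (Com : ι → ι → Prop) (hasTrans : Config → ι → Alph → Prop)
    (hdep : Deployable uses prec Com)
    (c : Config) (σ : Alph)
    (h : GloballyEnabled uses prec hasTrans c σ) :
    DistEnabled uses prec Com hasTrans c σ :=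
  ⟨fun _ hi => ⟨hdep.visible_of_uses hi, h.1 _ hi⟩,
    fun _ hστ _ => h.exists_blocked hστ⟩
end

section
/- In a system S under a deployable communication architecture, if a configuration c has no distributively-enabled interaction, then c has no globally enabled interaction, i.e., c is deadlocked. Consequently, the set of distributed-deadlock configurations equals the set of global-deadlock configurations. -/
/-! Group transmission lets every participant of `σ` see all of `σ`, and priority transmission
lets it see every `τ` with `prec σ τ`. Hence the local checks of distributed enablement cover
exactly the conditions of global enablement, so the two notions of enablement coincide, and with
them the two notions of deadlock. -/

section

variable {ι Alph Config : Type*} {uses : ι → Alph → Prop} {prec : Alph → Alph → Prop}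
  {Com : ι → ι → Prop} {hasTrans : Config → ι → Alph → Prop} {c : Config} {σ : Alph}

theorem distEnabled_of_globallyEnabled (hgroup : ∀ σ i j, uses i σ → uses j σ → Com i j)
    (h : GloballyEnabled uses prec hasTrans c σ) : DistEnabled uses prec Com hasTrans c σ := by
  obtain ⟨hjoint, hmax⟩ := h
  refine ⟨fun i hi => ⟨fun k hk => hgroup σ k i hk hi, hjoint i hi⟩, fun τ hτ _ => ?_⟩
  by_contra! hτjoint
  exact hmax ⟨τ, hτ, hτjoint⟩

theorem globallyEnabled_of_distEnabled
    (hprio : ∀ σ τ i j, prec σ τ → uses j σ → uses i τ → Com i j)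
    (h : DistEnabled uses prec Com hasTrans c σ) : GloballyEnabled uses prec hasTrans c σ := by
  obtain ⟨hready, hmax⟩ := h
  refine ⟨fun i hi => (hready i hi).2, ?_⟩
  rintro ⟨τ, hτ, hτjoint⟩
  obtain ⟨j, hj, hnot⟩ := hmax τ hτ fun i hi k hk => hprio σ τ k i hτ hi hk
  exact hnot (hτjoint j hj)

theorem Deployable.globallyEnabled_iff_distEnabled (hdep : Deployable uses prec Com) :
    GloballyEnabled uses prec hasTrans c σ ↔ DistEnabled uses prec Com hasTrans c σ :=
  ⟨distEnabled_of_globallyEnabled fun σ i j hi hj => (hdep.2.1 σ i j hi hj).1,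
    globallyEnabled_of_distEnabled hdep.2.2⟩

end

/-- Under a deployable communication architecture, a configuration
with no distributively-enabled interaction has no globally enabled interaction
(it is deadlocked); consequently the distributed-deadlock configurations are
exactly the global-deadlock configurations. -/
theorem stmt_5 {ι Alph Config : Type*}
    (uses : ι → Alph → Prop) (prec : Alph → Alph → Prop)
    (Com : ι → ι → Prop) (hasTrans : Config → ι → Alph → Prop)
    (hdep : Deployable uses prec Com) :
    (∀ c : Config, (¬ ∃ σ, DistEnabled uses prec Com hasTrans c σ) →
      ¬ ∃ σ, GloballyEnabled uses prec hasTrans c σ) ∧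
    ({c : Config | ¬ ∃ σ, DistEnabled uses prec Com hasTrans c σ} =
      {c : Config | ¬ ∃ σ, GloballyEnabled uses prec hasTrans c σ}) := by
  have hdeadlock : ∀ c : Config, (¬ ∃ σ, DistEnabled uses prec Com hasTrans c σ) ↔
      ¬ ∃ σ, GloballyEnabled uses prec hasTrans c σ := fun c => by
    simp only [hdep.globallyEnabled_iff_distEnabled]
  exact ⟨fun c => (hdeadlock c).mp, Set.ext hdeadlock⟩
end
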